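/- Let erfc y = (2/√π) ∫_y^∞ e^{−t²} dt. The function erfc is a strictly decreasing bijection from ℝ onto (0,2); for x ∈ (0,2) let y(x) denote its inverse (y(x) = inverfc x). Then as x → 0⁺, y(x) / √((1/2)·ln(2/(π x²))) → 1; that is, inverfc x ∼ √((1/2) ln(2/(π x²))). -/

import Mathlib

open MeasureTheory Real Set Filter Asymptotics Topology

/-- The complementary error function `erfc y = (2/√π) ∫_y^∞ e^(-t²) dt`. -/
noncomputable def erfcFun (y : ℝ) : ℝ := 2 / Real.sqrt Real.pi * ∫ t in Set.Ioi y, Real.exp (-t ^ 2)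

noncomputable def gI (y : ℝ) : ℝ := ∫ t in Set.Ioi y, Real.exp (-t ^ 2)

lemma integ : Integrable (fun t : ℝ => Real.exp (-t ^ 2)) := by
  simpa using integrable_exp_neg_mul_sq (b := (1:ℝ)) one_pos

lemma totalInt : ∫ t : ℝ, Real.exp (-t ^ 2) = Real.sqrt Real.pi := by
  simpa using integral_gaussian 1

lemma gI_split {a b : ℝ} (h : a ≤ b) :
    gI a = (∫ t in Set.Ioc a b, Real.exp (-t ^ 2)) + gI b := by
  rw [gI, gI, ← Set.Ioc_union_Ioi_eq_Ioi h,
    setIntegral_union Set.Ioc_disjoint_Ioi_same measurableSet_Ioi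
      integ.integrableOn integ.integrableOn]

lemma pos_Ioc {a b : ℝ} (h : a < b) : 0 < ∫ t in Set.Ioc a b, Real.exp (-t ^ 2) := by
  rw [← intervalIntegral.integral_of_le h.le]
  exact intervalIntegral.intervalIntegral_pos_of_pos integ.intervalIntegrable
    (fun x => Real.exp_pos _) h

lemma gI_nonneg (a : ℝ) : 0 ≤ gI a :=
  setIntegral_nonneg measurableSet_Ioi fun x _ => (Real.exp_pos _).le

lemma gI_pos (a : ℝ) : 0 < gI a := by
  have h := gI_split (a := a) (b := a + 1) (by linarith)
  have := pos_Ioc (a := a) (b := a + 1) (by linarith)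
  have := gI_nonneg (a + 1)
  linarith

lemma strictAnti_gI : StrictAnti gI := fun a b h => by
  have := gI_split h.le
  have := pos_Ioc h
  linarith

lemma Iic_eq (c : ℝ) : ∫ t in Set.Iic c, Real.exp (-t ^ 2) = gI (-c) := by
  rw [gI]
  have h := integral_comp_neg_Ioi (-c) (fun t : ℝ => Real.exp (-t ^ 2))
  simp only [neg_neg] at h
  rw [← h]
  simp

lemma gI_add (c : ℝ) : gI (-c) + gI c = Real.sqrt Real.pi := by
  rw [← Iic_eq, gI, ← totalInt]
  rw [← setIntegral_union (Set.Iic_disjoint_Ioi le_rfl) measurableSet_Ioi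
      integ.integrableOn integ.integrableOn, Set.Iic_union_Ioi, setIntegral_univ]

lemma gI_lt (c : ℝ) : gI c < Real.sqrt Real.pi := by
  have := gI_add c
  have := gI_pos (-c)
  linarith

lemma gI_eq (c : ℝ) : gI c = gI 0 - ∫ t in (0:ℝ)..c, Real.exp (-t ^ 2) := by
  rcases le_total 0 c with h | h
  · have := gI_split h
    rw [intervalIntegral.integral_of_le h]
    linarith
  · have := gI_split h
    rw [intervalIntegral.integral_symm, intervalIntegral.integral_of_le h]
    linarith

lemma continuous_gI : Continuous gI := by
  have h : Continuous fun c : ℝ => ∫ t in (0:ℝ)..c, Real.exp (-t ^ 2) :=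
    intervalIntegral.continuous_primitive (fun a b => integ.intervalIntegrable) 0
  exact (continuous_const.sub h).congr fun c => (gI_eq c).symm

lemma hasDeriv_aux (x : ℝ) :
    HasDerivAt (fun t : ℝ => -Real.exp (-t ^ 2) / 2) (x * Real.exp (-x ^ 2)) x := by
  have h : HasDerivAt (fun t : ℝ => -Real.exp (-t ^ 2) / 2)
      (-(Real.exp (-x ^ 2) * -(2 * x ^ 1)) / 2) x :=
    (((hasDerivAt_pow 2 x).neg).exp.neg).div_const 2
  convert h using 1
  ring

lemma tendsto_aux : Tendsto (fun t : ℝ => -Real.exp (-t ^ 2) / 2) atTop (𝓝 0) := by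
  have h1 : Tendsto (fun t : ℝ => -t ^ 2) atTop atBot := by
    rw [tendsto_neg_atBot_iff]
    exact tendsto_pow_atTop two_ne_zero
  have h2 : Tendsto (fun t : ℝ => Real.exp (-t ^ 2)) atTop (𝓝 0) :=
    Real.tendsto_exp_atBot.comp h1
  simpa using (h2.neg).div_const 2

lemma key_integrable {a : ℝ} (ha : 0 ≤ a) :
    IntegrableOn (fun t : ℝ => t * Real.exp (-t ^ 2)) (Set.Ioi a) :=
  integrableOn_Ioi_deriv_of_nonneg' (fun x _ => hasDeriv_aux x)
    (fun x hx => mul_nonneg (le_trans ha hx.out.le) (Real.exp_pos _).le) tendsto_aux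

lemma key_integral {a : ℝ} (ha : 0 ≤ a) :
    ∫ t in Set.Ioi a, t * Real.exp (-t ^ 2) = Real.exp (-a ^ 2) / 2 := by
  have h := integral_Ioi_of_hasDerivAt_of_nonneg' (fun x _ => hasDeriv_aux x)
    (fun x hx => mul_nonneg (le_trans ha hx.out.le) (Real.exp_pos _).le) tendsto_aux
  rw [h]; ring

lemma gI_upper {a : ℝ} (ha : 0 < a) : gI a ≤ Real.exp (-a ^ 2) / (2 * a) := by
  have hmono : gI a ≤ ∫ t in Set.Ioi a, (1 / a) * (t * Real.exp (-t ^ 2)) := by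
    refine setIntegral_mono_on integ.integrableOn
      ((key_integrable ha.le).const_mul _) measurableSet_Ioi fun x hx => ?_
    have hxa : a ≤ x := hx.out.le
    have h1 : (1:ℝ) ≤ x / a := (one_le_div ha).2 hxa
    have := mul_le_mul_of_nonneg_right h1 (Real.exp_pos (-x ^ 2)).le
    rw [one_mul] at this
    calc Real.exp (-x ^ 2) ≤ x / a * Real.exp (-x ^ 2) := this
      _ = 1 / a * (x * Real.exp (-x ^ 2)) := by ring
  rw [integral_const_mul, key_integral ha.le] at hmono
  calc gI a ≤ 1 / a * (Real.exp (-a ^ 2) / 2) := hmono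
    _ = Real.exp (-a ^ 2) / (2 * a) := by field_simp

lemma gI_lower {a : ℝ} (ha : 2 ≤ a) :
    Real.exp (-3) * Real.exp (-a ^ 2) / a ≤ gI a := by
  have ha0 : 0 < a := by linarith
  obtain ⟨b, hb⟩ : ∃ b : ℝ, b = a + 1 / a := ⟨_, rfl⟩
  have hab : a ≤ b := by
    have : 0 < 1 / a := by positivity
    simp [hb]; linarith
  have hchunk : (1 / a) * Real.exp (-b ^ 2) ≤ ∫ t in Set.Ioc a b, Real.exp (-t ^ 2) := by
    have h1 : ∫ t in Set.Ioc a b, Real.exp (-b ^ 2) ≤ ∫ t in Set.Ioc a b, Real.exp (-t ^ 2) := by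
      refine setIntegral_mono_on (integrableOn_const (by
        rw [Real.volume_Ioc]; exact ENNReal.ofReal_ne_top))
        integ.integrableOn measurableSet_Ioc fun x hx => ?_
      have h2 : 0 < x := lt_of_lt_of_le ha0 hx.1.le
      have h3 : x ≤ b := hx.2
      exact Real.exp_le_exp.2 (by nlinarith)
    rw [setIntegral_const, Real.volume_real_Ioc_of_le hab] at h1
    calc (1 / a) * Real.exp (-b ^ 2) = (b - a) * Real.exp (-b ^ 2) := by rw [hb]; ring_nf
      _ ≤ _ := by simpa [smul_eq_mul] using h1
  have hsplit := gI_split hab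
  have hnn := gI_nonneg b
  have hineq : Real.exp (-3) * Real.exp (-a ^ 2) / a ≤ (1 / a) * Real.exp (-b ^ 2) := by
    rw [← Real.exp_add]
    have hba : -b ^ 2 ≥ -3 + -a ^ 2 := by
      have h4 : (1 / a) ^ 2 ≤ 1 := by
        rw [div_pow, one_pow, div_le_one (by positivity)]
        nlinarith
      have hbsq : b ^ 2 = a ^ 2 + 2 + (1 / a) ^ 2 := by
        rw [hb]; field_simp; ring
      nlinarith [h4, hbsq]
    have h5 := Real.exp_le_exp.2 hba
    have h6 : Real.exp (-3 + -a ^ 2) / a ≤ Real.exp (-b ^ 2) / a := by gcongr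
    have h7 : Real.exp (-b ^ 2) / a = (1 / a) * Real.exp (-b ^ 2) := by ring
    linarith
  linarith

lemma gI_tendsto_top : Tendsto gI atTop (𝓝 0) := by
  have hub : ∀ᶠ a : ℝ in atTop, gI a ≤ 1 / (2 * a) := by
    filter_upwards [eventually_gt_atTop (0:ℝ)] with a ha
    calc gI a ≤ Real.exp (-a ^ 2) / (2 * a) := gI_upper ha
      _ ≤ 1 / (2 * a) :=
        div_le_div_of_nonneg_right (Real.exp_le_one_iff.2 (by nlinarith)) (by positivity)
  have hlim : Tendsto (fun a : ℝ => 1 / (2 * a)) atTop (𝓝 0) :=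
    tendsto_const_nhds.div_atTop (Tendsto.const_mul_atTop two_pos tendsto_id)
  exact tendsto_of_tendsto_of_tendsto_of_le_of_le' tendsto_const_nhds hlim
    (Eventually.of_forall gI_nonneg) hub

lemma gI_tendsto_bot : Tendsto gI atBot (𝓝 (Real.sqrt Real.pi)) := by
  have h1 : Tendsto (fun c : ℝ => gI (-c)) atBot (𝓝 0) :=
    gI_tendsto_top.comp tendsto_neg_atBot_atTop
  have h2 : Tendsto (fun c : ℝ => Real.sqrt Real.pi - gI (-c)) atBot
      (𝓝 (Real.sqrt Real.pi - 0)) := tendsto_const_nhds.sub h1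
  rw [sub_zero] at h2
  exact h2.congr fun c => by have := gI_add c; linarith

lemma L_bounds {t x : ℝ} (ht : 2 ≤ t) (hx : 0 < x)
    (h1 : Real.sqrt Real.pi * x / 2 ≤ Real.exp (-t ^ 2) / (2 * t))
    (h2 : Real.exp (-3) * Real.exp (-t ^ 2) / t ≤ Real.sqrt Real.pi * x / 2) :
    t ^ 2 ≤ 1 / 2 * Real.log (2 / (Real.pi * x ^ 2)) ∧
      1 / 2 * Real.log (2 / (Real.pi * x ^ 2)) ≤ t ^ 2 + Real.log t + 3 := by
  have ht0 : (0:ℝ) < t := by linarith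
  have hπ : (0:ℝ) < Real.pi := Real.pi_pos
  have hsπ : (0:ℝ) < Real.sqrt Real.pi := Real.sqrt_pos.2 hπ
  have hlogsπ : Real.log (Real.sqrt Real.pi) = Real.log Real.pi / 2 := Real.log_sqrt hπ.le
  have hxu : x ≤ Real.exp (-t ^ 2) / (Real.sqrt Real.pi * t) := by
    rw [le_div_iff₀ (by positivity)]
    rw [div_le_div_iff₀ (by norm_num) (by positivity)] at h1
    nlinarith
  have hxl : 2 * Real.exp (-3) * Real.exp (-t ^ 2) / (Real.sqrt Real.pi * t) ≤ x := by
    rw [div_le_iff₀ (by positivity)]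
    rw [div_le_div_iff₀ (by positivity) (by norm_num)] at h2
    nlinarith
  have hlx_u : Real.log x ≤ -t ^ 2 - Real.log Real.pi / 2 - Real.log t := by
    have h := Real.log_le_log hx hxu
    rw [Real.log_div (Real.exp_ne_zero _) (by positivity), Real.log_exp,
      Real.log_mul (ne_of_gt hsπ) (ne_of_gt ht0), hlogsπ] at h
    linarith
  have hlx_l : Real.log 2 - 3 - t ^ 2 - Real.log Real.pi / 2 - Real.log t ≤ Real.log x := by
    have h0 : (0:ℝ) < 2 * Real.exp (-3) * Real.exp (-t ^ 2) / (Real.sqrt Real.pi * t) := by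
      positivity
    have h := Real.log_le_log h0 hxl
    rw [Real.log_div (by positivity) (by positivity),
      Real.log_mul (by positivity) (Real.exp_ne_zero _),
      Real.log_mul (by norm_num) (Real.exp_ne_zero _), Real.log_exp, Real.log_exp,
      Real.log_mul (ne_of_gt hsπ) (ne_of_gt ht0), hlogsπ] at h
    linarith
  have hL : 1 / 2 * Real.log (2 / (Real.pi * x ^ 2))
      = Real.log 2 / 2 - Real.log Real.pi / 2 - Real.log x := by
    rw [Real.log_div (by norm_num) (by positivity),
      Real.log_mul (ne_of_gt hπ) (by positivity), Real.log_pow]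
    push_cast
    ring
  have hlogt : 0 ≤ Real.log t := Real.log_nonneg (by linarith)
  have hlog2 : 0 ≤ Real.log 2 := Real.log_nonneg one_le_two
  constructor <;> rw [hL] <;> linarith

theorem stmt18 (y : ℝ → ℝ) (hy : ∀ x ∈ Set.Ioo (0:ℝ) 2, erfcFun (y x) = x) :
    StrictAnti erfcFun ∧ Set.BijOn erfcFun Set.univ (Set.Ioo (0:ℝ) 2) ∧
    Filter.Tendsto (fun x => y x / Real.sqrt (1 / 2 * Real.log (2 / (Real.pi * x ^ 2))))
      (𝓝[>] 0) (𝓝 1) := by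
  have hπ : (0:ℝ) < Real.pi := Real.pi_pos
  have hsπ : (0:ℝ) < Real.sqrt Real.pi := Real.sqrt_pos.2 hπ
  have hcpos : (0:ℝ) < 2 / Real.sqrt Real.pi := by positivity
  have herfc : ∀ c, erfcFun c = 2 / Real.sqrt Real.pi * gI c := fun c => rfl
  have hcancel : 2 / Real.sqrt Real.pi * Real.sqrt Real.pi = 2 :=
    div_mul_cancel₀ 2 (ne_of_gt hsπ)
  have hsa : StrictAnti erfcFun := fun a b h => by
    rw [herfc, herfc]
    exact mul_lt_mul_of_pos_left (strictAnti_gI h) hcpos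
  have hmaps : ∀ c : ℝ, erfcFun c ∈ Set.Ioo (0:ℝ) 2 := fun c => by
    rw [herfc]
    refine ⟨mul_pos hcpos (gI_pos c), ?_⟩
    have h := mul_lt_mul_of_pos_left (gI_lt c) hcpos
    rwa [hcancel] at h
  have hcont : Continuous erfcFun := continuous_const.mul continuous_gI
  have htop : Tendsto erfcFun atTop (𝓝 0) := by
    have h := gI_tendsto_top.const_mul (2 / Real.sqrt Real.pi)
    exact (by simpa using h : Tendsto (fun x => 2 / Real.sqrt Real.pi * gI x) atTop (𝓝 0))
  have hbot : Tendsto erfcFun atBot (𝓝 2) := by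
    have h := gI_tendsto_bot.const_mul (2 / Real.sqrt Real.pi)
    rwa [hcancel] at h
  have hbij : Set.BijOn erfcFun Set.univ (Set.Ioo (0:ℝ) 2) := by
    refine ⟨fun c _ => hmaps c, hsa.injective.injOn, fun x hx => ?_⟩
    obtain ⟨a, ha⟩ := (htop.eventually_lt_const hx.1).exists
    obtain ⟨b, hb⟩ := (hbot.eventually_const_lt hx.2).exists
    have hba : b ≤ a := by
      by_contra h
      push_neg at h
      have := hsa h
      linarith
    obtain ⟨c, _, hc⟩ := intermediate_value_Icc' hba hcont.continuousOn ⟨ha.le, hb.le⟩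
    exact ⟨c, trivial, hc⟩
  refine ⟨hsa, hbij, ?_⟩
  have hyI : ∀ x ∈ Set.Ioo (0:ℝ) 2, gI (y x) = Real.sqrt Real.pi * x / 2 := by
    intro x hx
    have h := hy x hx
    rw [herfc] at h
    field_simp at h ⊢
    linarith
  have hytop : Tendsto y (𝓝[>] (0:ℝ)) atTop := by
    rw [tendsto_atTop]
    intro M
    have hM := hmaps M
    have hmem : Set.Ioo (0:ℝ) (min (erfcFun M) 2) ∈ 𝓝[>] (0:ℝ) :=
      Ioo_mem_nhdsGT_of_mem ⟨le_refl 0, lt_min hM.1 two_pos⟩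
    filter_upwards [hmem] with x hx
    have hx2 : x ∈ Set.Ioo (0:ℝ) 2 := ⟨hx.1, lt_of_lt_of_le hx.2 (min_le_right _ _)⟩
    by_contra h
    push_neg at h
    have h3 := hsa h
    rw [hy x hx2] at h3
    exact absurd (lt_of_lt_of_le hx.2 (min_le_left _ _)) (not_lt.2 h3.le)
  have hev : ∀ᶠ x in 𝓝[>] (0:ℝ), x ∈ Set.Ioo (0:ℝ) 2 ∧ 2 ≤ y x := by
    have h1 : Set.Ioo (0:ℝ) 2 ∈ 𝓝[>] (0:ℝ) :=
      Ioo_mem_nhdsGT_of_mem ⟨le_refl 0, two_pos⟩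
    filter_upwards [h1, hytop.eventually (eventually_ge_atTop 2)] with x h h' using ⟨h, h'⟩
  have key : ∀ᶠ x in 𝓝[>] (0:ℝ),
      y x / (y x + 2) ≤ y x / Real.sqrt (1 / 2 * Real.log (2 / (Real.pi * x ^ 2))) ∧
      y x / Real.sqrt (1 / 2 * Real.log (2 / (Real.pi * x ^ 2))) ≤ 1 := by
    filter_upwards [hev] with x hx
    obtain ⟨hx2, hyx2⟩ := hx
    have ht0 : (0:ℝ) < y x := by linarith
    have hI := hyI x hx2
    have hb1 : Real.sqrt Real.pi * x / 2 ≤ Real.exp (-(y x) ^ 2) / (2 * y x) := by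
      rw [← hI]; exact gI_upper ht0
    have hb2 : Real.exp (-3) * Real.exp (-(y x) ^ 2) / y x ≤ Real.sqrt Real.pi * x / 2 := by
      rw [← hI]; exact gI_lower hyx2
    obtain ⟨hLl, hLu⟩ := L_bounds hyx2 hx2.1 hb1 hb2
    set L := 1 / 2 * Real.log (2 / (Real.pi * x ^ 2)) with hLdef
    have hLpos : 0 < L := by nlinarith
    have hsL : 0 < Real.sqrt L := Real.sqrt_pos.2 hLpos
    have hlogt : 0 ≤ Real.log (y x) := Real.log_nonneg (by linarith)
    constructor
    · have hle : Real.sqrt L ≤ Real.sqrt ((y x) ^ 2 + Real.log (y x) + 3) :=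
        Real.sqrt_le_sqrt hLu
      have hle2 : Real.sqrt ((y x) ^ 2 + Real.log (y x) + 3) ≤ y x + 2 := by
        have hlog : Real.log (y x) ≤ y x := (Real.log_le_sub_one_of_pos ht0).trans (by linarith)
        calc Real.sqrt ((y x) ^ 2 + Real.log (y x) + 3) ≤ Real.sqrt ((y x + 2) ^ 2) :=
              Real.sqrt_le_sqrt (by nlinarith)
          _ = y x + 2 := Real.sqrt_sq (by linarith)
      gcongr
      exact hle.trans hle2
    · rw [div_le_one hsL]
      calc y x = Real.sqrt ((y x) ^ 2) := (Real.sqrt_sq ht0.le).symm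
        _ ≤ Real.sqrt L := Real.sqrt_le_sqrt hLl
  have hlower : Tendsto (fun x => y x / (y x + 2)) (𝓝[>] (0:ℝ)) (𝓝 1) := by
    have hl : Tendsto (fun t : ℝ => t / (t + 2)) atTop (𝓝 1) := by
      have h0 : Tendsto (fun t : ℝ => 2 / (t + 2)) atTop (𝓝 0) :=
        tendsto_const_nhds.div_atTop (tendsto_atTop_add_const_right _ 2 tendsto_id)
      have h1 : Tendsto (fun t : ℝ => 1 - 2 / (t + 2)) atTop (𝓝 (1 - 0)) :=
        tendsto_const_nhds.sub h0
      rw [sub_zero] at h1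
      apply h1.congr'
      filter_upwards [eventually_gt_atTop (0:ℝ)] with t ht
      field_simp; ring
    exact hl.comp hytop
  exact tendsto_of_tendsto_of_tendsto_of_le_of_le' hlower tendsto_const_nhds
    (key.mono fun x h => h.1) (key.mono fun x h => h.2)
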